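/- arXiv:1304.4998 — 4 statements merged into one kernel-verified Lean document; each statement's English description precedes it below -/
import Mathlib

section
/- For the Weyl group of A2 and any real a,b with a > b > 0, the multiset of pairwise sums of the orbits O(a,0) and O(b,0) equals the multiset union O(a-b, b) ∪ O(a+b, 0), where each orbit has 3 points. -/
open scoped Classical

noncomputable section

/-- Reflection `r₁` in ω-basis coordinates: `r₁ (x,y) = (-x, c₁*x + y)`. -/
def refl1 (c1 : ℝ) (p : ℝ × ℝ) : ℝ × ℝ := (-p.1, c1 * p.1 + p.2)

/-- Reflection `r₂` in ω-basis coordinates: `r₂ (x,y) = (x + c₂*y, -y)`. -/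
def refl2 (c2 : ℝ) (p : ℝ × ℝ) : ℝ × ℝ := (p.1 + c2 * p.2, -p.2)

/-- The orbit of `p` under the group generated by the two reflections. -/
def orbit (c1 c2 : ℝ) (p : ℝ × ℝ) : Set (ℝ × ℝ) :=
  {q | Relation.ReflTransGen (fun u v => v = refl1 c1 u ∨ v = refl2 c2 u) p q}

/-- The orbit of a dominant point of `A₂` as an explicit multiset (ω-basis coordinates). -/
def A2orbitM (p : ℝ × ℝ) : Multiset (ℝ × ℝ) :=
  if p.1 = 0 ∧ p.2 = 0 then {((0:ℝ), (0:ℝ))}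
  else if p.2 = 0 then {(p.1, 0), (-p.1, p.1), (0, -p.1)}
  else if p.1 = 0 then {(0, p.2), (p.2, -p.2), (-p.2, 0)}
  else {(p.1, p.2), (-p.1, p.1 + p.2), (p.1 + p.2, -p.2),
        (-p.1 - p.2, p.1), (p.2, -p.1 - p.2), (-p.2, -p.1)}

/-- The product of two `A₂` orbits: the multiset of all pairwise sums. -/
def A2prodM (p q : ℝ × ℝ) : Multiset (ℝ × ℝ) :=
  (A2orbitM p).bind fun x => (A2orbitM q).map fun y => x + y

theorem A2_product_a0_b0 (a b : ℝ) (hb : 0 < b) (hab : b < a) :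
    A2prodM (a, 0) (b, 0) = A2orbitM (a - b, b) + A2orbitM (a + b, 0) := by
  have ha : a ≠ 0 := by linarith
  have hb' : b ≠ 0 := hb.ne'
  have h1 : a - b ≠ 0 := by intro h; linarith [sub_eq_zero.mp h]
  have h2 : a + b ≠ 0 := by intro h; linarith
  simp [A2prodM, A2orbitM, ha, hb', h1, h2, Prod.mk_add_mk]
  have e1 : a + -b = a - b := by ring
  have e2 : -a + b = b - a := by ring
  have e3 : -a + -b = -b + -a := by ring
  rw [e1, e2, e3]
  simp only [← Multiset.singleton_add]
  abel
end
end

section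
/- For the Weyl group of A2 and any real a,b > 0 with a > b, the multiset of pairwise sums of O(a,0) and O(0,b) equals O(a,b) ∪ O(a-b,0); if a = b it equals O(a,a) ∪ 3·O(0,0); if a < b it equals O(a,b) ∪ O(0,b-a). -/
open scoped Classical

noncomputable section

theorem A2_product_a0_0b (a b : ℝ) (ha : 0 < a) (hb : 0 < b) :
    (b < a → A2prodM (a, 0) (0, b) = A2orbitM (a, b) + A2orbitM (a - b, 0)) ∧
    (a = b → A2prodM (a, 0) (0, b) = A2orbitM (a, a) + 3 • A2orbitM (0, 0)) ∧
    (a < b → A2prodM (a, 0) (0, b) = A2orbitM (a, b) + A2orbitM (0, b - a)) := by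
  refine ⟨fun h => ?_, fun h => ?_, fun h => ?_⟩
  · have hab : a - b ≠ 0 := sub_ne_zero.2 h.ne'
    simp only [A2prodM, A2orbitM, ha.ne', hb.ne', hab, if_true, if_false, and_false,
      false_and, if_neg, not_false_iff]
    simp only [Multiset.insert_eq_cons, Multiset.cons_bind, Multiset.singleton_bind,
      Multiset.map_cons, Multiset.map_singleton, Prod.mk_add_mk]
    simp only [← Multiset.singleton_add]
    ring_nf
    abel
  · subst h
    simp only [A2prodM, A2orbitM, ha.ne', if_true, if_false, and_false, false_and,
      and_self, if_neg, not_false_iff]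
    simp only [Multiset.insert_eq_cons, Multiset.cons_bind, Multiset.singleton_bind,
      Multiset.map_cons, Multiset.map_singleton, Prod.mk_add_mk, succ_nsmul, one_nsmul]
    simp only [← Multiset.singleton_add]
    ring_nf
    abel
  · have hab : b - a ≠ 0 := sub_ne_zero.2 h.ne'
    simp only [A2prodM, A2orbitM, ha.ne', hb.ne', hab, if_true, if_false, and_false,
      false_and, if_neg, not_false_iff]
    simp only [Multiset.insert_eq_cons, Multiset.cons_bind, Multiset.singleton_bind,
      Multiset.map_cons, Multiset.map_singleton, Prod.mk_add_mk]
    simp only [← Multiset.singleton_add]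
    ring_nf
    abel
end
end

section
/- For the Weyl group of A2 and any real a > 0, the multiset of pairwise sums of O(a,a) with itself (36 points with multiplicity) equals O(2a,2a) ∪ 2·O(0,3a) ∪ 2·O(a,a) ∪ 2·O(3a,0) ∪ 6·O(0,0) as multisets. -/
open scoped Classical

noncomputable section

theorem A2_product_aa_aa (a : ℝ) (ha : 0 < a) :
    A2prodM (a, a) (a, a) =
      A2orbitM (2 * a, 2 * a) + 2 • A2orbitM (0, 3 * a) + 2 • A2orbitM (a, a) +
        2 • A2orbitM (3 * a, 0) + 6 • A2orbitM (0, 0) := by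
  have h : a ≠ 0 := ha.ne'
  have h3 : 3*a ≠ 0 := by positivity
  have h2 : 2*a ≠ 0 := by positivity
  simp only [A2prodM, A2orbitM, h, h2, h3, if_neg, and_false, false_and, if_false, if_true, and_self, eq_self_iff_true]
  simp only [Multiset.cons_bind, Multiset.singleton_bind, Multiset.map_cons, Multiset.map_singleton,
    Prod.mk_add_mk, Multiset.insert_eq_cons, smul_eq_mul]
  ring_nf
  simp only [← Multiset.singleton_add, Multiset.insert_eq_cons, nsmul_eq_mul]

  abel
end
end

section
/- For the Coxeter group H2 and any real a > 0, the multiset of pairwise sums of the orbits O(a,0) and O(0,a) equals O(a,a) ∪ O(aτ-a, aτ-a) ∪ 5·O(0,0) as multisets (25 points with multiplicity), where τ=(1+√5)/2. -/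
open scoped Classical

noncomputable section

/-- The golden ratio. -/
def τ : ℝ := (1 + Real.sqrt 5) / 2

/-- The orbit of a dominant point of `H₂` as an explicit multiset (ω-basis coordinates). -/
def H2orbitM (p : ℝ × ℝ) : Multiset (ℝ × ℝ) :=
  if p.1 = 0 ∧ p.2 = 0 then {((0:ℝ), (0:ℝ))}
  else if p.2 = 0 then
    {(p.1, 0), (-p.1, p.1 * τ), (p.1 * τ, -(p.1 * τ)), (-(p.1 * τ), p.1), (0, -p.1)}
  else if p.1 = 0 then
    {(0, p.2), (p.2 * τ, -p.2), (-(p.2 * τ), p.2 * τ), (p.2, -(p.2 * τ)), (-p.2, 0)}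
  else {(p.1, p.2), (-p.1, p.2 + p.1 * τ), (p.1 * τ + p.2 * τ, -p.2 - p.1 * τ),
        (-(p.1 * τ) - p.2 * τ, p.1 + p.2 * τ), (p.2, -p.1 - p.2 * τ),
        (p.1 + p.2 * τ, -p.2), (-p.1 - p.2 * τ, p.1 * τ + p.2 * τ),
        (p.2 + p.1 * τ, -(p.1 * τ) - p.2 * τ), (-p.2 - p.1 * τ, p.1), (-p.2, -p.1)}

/-- The product of two `H₂` orbits: the multiset of all pairwise sums. -/
def H2prodM (p q : ℝ × ℝ) : Multiset (ℝ × ℝ) :=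
  (H2orbitM p).bind fun x => (H2orbitM q).map fun y => x + y

/-!
Every coordinate occurring here is an integer combination of `a` and `aτ`; for the point
`(aτ - a, aτ - a)` this uses `τ² = τ + 1`, i.e. `(aτ - a)τ = a`. So all four orbits are images
of multisets of integer coefficient vectors under one additive map, pairwise sums commute with
that map, and the identity becomes a finite computation with integer vectors.
-/

lemma Multiset.bind_map_add_map {α β F : Type*} [Add α] [Add β] [FunLike F α β]
    [AddHomClass F α β] (f : F) (s t : Multiset α) :
    ((s.map f).bind fun x => (t.map f).map fun y => x + y) =
      (s.bind fun x => t.map fun y => x + y).map f := by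
  simp [Multiset.bind_map, Multiset.map_bind, Multiset.map_map]

def goldenCoord (a : ℝ) : ℤ × ℤ →+ ℝ :=
  (zmultiplesHom ℝ a).coprod (zmultiplesHom ℝ (a * τ))

def goldenPoint (a : ℝ) : (ℤ × ℤ) × (ℤ × ℤ) →+ ℝ × ℝ :=
  (goldenCoord a).prodMap (goldenCoord a)

lemma H2orbitM_mk_zero_eq_map {a : ℝ} (ha : a ≠ 0) :
    H2orbitM (a, 0) = Multiset.map (goldenPoint a)
      {((1, 0), (0, 0)), ((-1, 0), (0, 1)), ((0, 1), (0, -1)), ((0, -1), (1, 0)),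
       ((0, 0), (-1, 0))} := by
  simp [H2orbitM, goldenPoint, goldenCoord, ha]

lemma H2orbitM_zero_mk_eq_map {a : ℝ} (ha : a ≠ 0) :
    H2orbitM (0, a) = Multiset.map (goldenPoint a)
      {((0, 0), (1, 0)), ((0, 1), (-1, 0)), ((0, -1), (0, 1)), ((1, 0), (0, -1)),
       ((-1, 0), (0, 0))} := by
  simp [H2orbitM, goldenPoint, goldenCoord, ha]

lemma H2orbitM_mk_self_eq_map {a : ℝ} (ha : a ≠ 0) :
    H2orbitM (a, a) = Multiset.map (goldenPoint a)
      {((1, 0), (1, 0)), ((-1, 0), (1, 1)), ((0, 2), (-1, -1)), ((0, -2), (1, 1)),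
       ((1, 0), (-1, -1)), ((1, 1), (-1, 0)), ((-1, -1), (0, 2)), ((1, 1), (0, -2)),
       ((-1, -1), (1, 0)), ((-1, 0), (-1, 0))} := by
  simp [H2orbitM, goldenPoint, goldenCoord, ha]
  ring_nf

lemma H2orbitM_mul_τ_sub_self_eq_map {a : ℝ} (ha : a ≠ 0) :
    H2orbitM (a * τ - a, a * τ - a) = Multiset.map (goldenPoint a)
      {((-1, 1), (-1, 1)), ((1, -1), (0, 1)), ((2, 0), (0, -1)), ((-2, 0), (0, 1)),
       ((-1, 1), (0, -1)), ((0, 1), (1, -1)), ((0, -1), (2, 0)), ((0, 1), (-2, 0)),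
       ((0, -1), (-1, 1)), ((1, -1), (1, -1))} := by
  have hτ : 1 < τ := Real.one_lt_goldenRatio
  have hb : a * τ - a ≠ 0 := by
    rw [← mul_sub_one]
    exact mul_ne_zero ha (by linarith)
  have hbτ : (a * τ - a) * τ = a := by
    have hτ2 : τ ^ 2 = τ + 1 := Real.goldenRatio_sq
    linear_combination a * hτ2
  simp [H2orbitM, goldenPoint, goldenCoord, hb, hbτ]
  ring_nf

lemma H2orbitM_zero_eq_map (a : ℝ) :
    H2orbitM (0, 0) = Multiset.map (goldenPoint a) {0} := by
  simp [H2orbitM]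

theorem H2_product_a0_0a (a : ℝ) (ha : 0 < a) :
    H2prodM (a, 0) (0, a) =
      H2orbitM (a, a) + H2orbitM (a * τ - a, a * τ - a) + 5 • H2orbitM (0, 0) := by
  rw [H2prodM, H2orbitM_mk_zero_eq_map ha.ne', H2orbitM_zero_mk_eq_map ha.ne',
    Multiset.bind_map_add_map, H2orbitM_mk_self_eq_map ha.ne',
    H2orbitM_mul_τ_sub_self_eq_map ha.ne', H2orbitM_zero_eq_map a,
    ← Multiset.map_nsmul, ← Multiset.map_add, ← Multiset.map_add]
  congr 1
  decide
end
end
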